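/- arXiv:2402.18207 — 4 statements merged into one kernel-verified Lean document; each statement's English description precedes it below -/
import Mathlib

section
/- Each of the eight points s1=(0:0:0:1), s2=(1:0:0:1), s3=(0:0:1:0), s4=(1:0:1:0), s5=(0:1:0:0), s6=(0:1:0:1), s7=(1:-1:1:0), s8=(1:0:0:0) lies on the quartic surface Z7 and is a singular point of it. -/
open MvPolynomial

/-- The defining quartic of the surface `Z₇` in `ℙ³`. -/
noncomputable def Z7 : MvPolynomial (Fin 4) ℂ :=
  X 0 ^ 2 * X 1 ^ 2 + X 0 ^ 2 * X 1 * X 2 - X 0 * X 1 ^ 2 * X 2 - X 0 * X 1 * X 2 ^ 2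
    - X 0 ^ 2 * X 1 * X 3 - X 0 * X 1 ^ 2 * X 3 + X 0 * X 1 * X 2 * X 3 - X 1 * X 2 ^ 2 * X 3
    + X 0 * X 1 * X 3 ^ 2 + X 2 ^ 2 * X 3 ^ 2

/-- The eight singular points `s₁, …, s₈` of `Z₇`. -/
def Z7sing : Fin 8 → Fin 4 → ℂ :=
  ![![0, 0, 0, 1], ![1, 0, 0, 1], ![0, 0, 1, 0], ![1, 0, 1, 0],
    ![0, 1, 0, 0], ![0, 1, 0, 1], ![1, -1, 1, 0], ![1, 0, 0, 0]]

namespace Z7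

variable (x : Fin 4 → ℂ)

theorem eval_eq : eval x Z7 =
    x 0 ^ 2 * x 1 ^ 2 + x 0 ^ 2 * x 1 * x 2 - x 0 * x 1 ^ 2 * x 2 - x 0 * x 1 * x 2 ^ 2
      - x 0 ^ 2 * x 1 * x 3 - x 0 * x 1 ^ 2 * x 3 + x 0 * x 1 * x 2 * x 3 - x 1 * x 2 ^ 2 * x 3
      + x 0 * x 1 * x 3 ^ 2 + x 2 ^ 2 * x 3 ^ 2 := by
  simp [Z7]

theorem eval_pderiv (i : Fin 4) : eval x (pderiv i Z7) =
    ![2 * x 0 * x 1 ^ 2 + 2 * x 0 * x 1 * x 2 - x 1 ^ 2 * x 2 - x 1 * x 2 ^ 2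
        - 2 * x 0 * x 1 * x 3 - x 1 ^ 2 * x 3 + x 1 * x 2 * x 3 + x 1 * x 3 ^ 2,
      2 * x 0 ^ 2 * x 1 + x 0 ^ 2 * x 2 - 2 * x 0 * x 1 * x 2 - x 0 * x 2 ^ 2
        - x 0 ^ 2 * x 3 - 2 * x 0 * x 1 * x 3 + x 0 * x 2 * x 3 - x 2 ^ 2 * x 3 + x 0 * x 3 ^ 2,
      x 0 ^ 2 * x 1 - x 0 * x 1 ^ 2 - 2 * x 0 * x 1 * x 2 + x 0 * x 1 * x 3
        - 2 * x 1 * x 2 * x 3 + 2 * x 2 * x 3 ^ 2,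
      - x 0 ^ 2 * x 1 - x 0 * x 1 ^ 2 + x 0 * x 1 * x 2 - x 1 * x 2 ^ 2
        + 2 * x 0 * x 1 * x 3 + 2 * x 2 ^ 2 * x 3] i := by
  fin_cases i <;>
    simp only [Fin.zero_eta, Fin.mk_one, Fin.reduceFinMk, Fin.isValue, Z7, map_add, map_sub,
      map_mul, map_pow, Derivation.leibniz, Derivation.leibniz_pow, pderiv_X, Pi.single_apply,
      Fin.reduceEq, if_true, if_false, map_zero, map_one, eval_X, eval_ofNat, smul_eq_mul,
      nsmul_eq_mul, Nat.cast_ofNat, Matrix.cons_val] <;>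
    ring

end Z7

/-- Each of the eight points `s₁, …, s₈` lies on the quartic surface `Z₇` and is a singular
point of it: the quartic and all four of its partial derivatives vanish there. -/
theorem Z7_eight_singular_points :
    ∀ j : Fin 8, eval (Z7sing j) Z7 = 0 ∧ ∀ i : Fin 4, eval (Z7sing j) (pderiv i Z7) = 0 := by
  intro j
  refine ⟨?_, fun i => ?_⟩
  · rw [Z7.eval_eq]
    fin_cases j <;> simp [Z7sing, Matrix.cons_val]
  · rw [Z7.eval_pderiv]
    fin_cases j <;> fin_cases i <;> simp [Z7sing, Matrix.cons_val]
    norm_num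
end

section
/- The twelve lines L1: y2=y3=0, L2: y1=y3=0, L3: y2=y4=0, L4: y1-y3=y4=0, L5: y1=y4=0, L6: y2-y4=y3=0, L7: y1-y3-y4=y2+y3=0, L8: y1-y3=y2+y3=0, L9: y2+y3=y4=0, L10: y1-y4=y3=0, L11: y1-y3=y2-y4=0, L12: y1=y2-y4=0 are all contained in the quartic surface Z7. -/
/-!
Each of the five planes `y1 = 0`, `y3 = 0`, `y4 = 0`, `y1 = y3`, `y2 = -y3` cuts `Z₇` in four
lines: restricted to the plane, the quartic factors into four linear forms. Each of the twelve
lines is one of these components.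
-/

/-- The defining quartic of the surface `Z₇` in `ℙ³`, as a function of the coordinates. -/
def Z7fun (y1 y2 y3 y4 : ℂ) : ℂ :=
  y1 ^ 2 * y2 ^ 2 + y1 ^ 2 * y2 * y3 - y1 * y2 ^ 2 * y3 - y1 * y2 * y3 ^ 2
    - y1 ^ 2 * y2 * y4 - y1 * y2 ^ 2 * y4 + y1 * y2 * y3 * y4 - y2 * y3 ^ 2 * y4
    + y1 * y2 * y4 ^ 2 + y3 ^ 2 * y4 ^ 2

section PlaneSections

variable {y1 y2 y3 y4 : ℂ}

lemma Z7fun_of_y1_eq_zero (h : y1 = 0) :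
    Z7fun y1 y2 y3 y4 = -(y3 ^ 2 * y4 * (y2 - y4)) := by
  subst h
  unfold Z7fun
  ring

lemma Z7fun_of_y3_eq_zero (h : y3 = 0) :
    Z7fun y1 y2 y3 y4 = y1 * y2 * (y1 - y4) * (y2 - y4) := by
  subst h
  unfold Z7fun
  ring

lemma Z7fun_of_y4_eq_zero (h : y4 = 0) :
    Z7fun y1 y2 y3 y4 = y1 * y2 * (y1 - y3) * (y2 + y3) := by
  subst h
  unfold Z7fun
  ring

lemma Z7fun_of_y1_sub_y3_eq_zero (h : y1 - y3 = 0) :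
    Z7fun y1 y2 y3 y4 = -(y3 * y4 * (y2 + y3) * (y2 - y4)) := by
  rw [sub_eq_zero.mp h]
  unfold Z7fun
  ring

lemma Z7fun_of_y2_add_y3_eq_zero (h : y2 + y3 = 0) :
    Z7fun y1 y2 y3 y4 = y3 * y4 * (y1 - y3) * (y1 - y3 - y4) := by
  rw [eq_neg_of_add_eq_zero_left h]
  unfold Z7fun
  ring

end PlaneSections

/-- The twelve lines `L₁, …, L₁₂` are all contained in the quartic surface `Z₇`. -/
theorem Z7_contains_twelve_lines :
    (∀ y1 y2 y3 y4 : ℂ, y2 = 0 → y3 = 0 → Z7fun y1 y2 y3 y4 = 0) ∧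
    (∀ y1 y2 y3 y4 : ℂ, y1 = 0 → y3 = 0 → Z7fun y1 y2 y3 y4 = 0) ∧
    (∀ y1 y2 y3 y4 : ℂ, y2 = 0 → y4 = 0 → Z7fun y1 y2 y3 y4 = 0) ∧
    (∀ y1 y2 y3 y4 : ℂ, y1 - y3 = 0 → y4 = 0 → Z7fun y1 y2 y3 y4 = 0) ∧
    (∀ y1 y2 y3 y4 : ℂ, y1 = 0 → y4 = 0 → Z7fun y1 y2 y3 y4 = 0) ∧
    (∀ y1 y2 y3 y4 : ℂ, y2 - y4 = 0 → y3 = 0 → Z7fun y1 y2 y3 y4 = 0) ∧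
    (∀ y1 y2 y3 y4 : ℂ, y1 - y3 - y4 = 0 → y2 + y3 = 0 → Z7fun y1 y2 y3 y4 = 0) ∧
    (∀ y1 y2 y3 y4 : ℂ, y1 - y3 = 0 → y2 + y3 = 0 → Z7fun y1 y2 y3 y4 = 0) ∧
    (∀ y1 y2 y3 y4 : ℂ, y2 + y3 = 0 → y4 = 0 → Z7fun y1 y2 y3 y4 = 0) ∧
    (∀ y1 y2 y3 y4 : ℂ, y1 - y4 = 0 → y3 = 0 → Z7fun y1 y2 y3 y4 = 0) ∧
    (∀ y1 y2 y3 y4 : ℂ, y1 - y3 = 0 → y2 - y4 = 0 → Z7fun y1 y2 y3 y4 = 0) ∧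
    (∀ y1 y2 y3 y4 : ℂ, y1 = 0 → y2 - y4 = 0 → Z7fun y1 y2 y3 y4 = 0) :=
  ⟨fun _ _ _ _ h h' => by rw [Z7fun_of_y3_eq_zero h', h]; ring,
   fun _ _ _ _ h h' => by rw [Z7fun_of_y1_eq_zero h, h']; ring,
   fun _ _ _ _ h h' => by rw [Z7fun_of_y4_eq_zero h', h]; ring,
   fun _ _ _ _ h h' => by rw [Z7fun_of_y4_eq_zero h', h]; ring,
   fun _ _ _ _ h h' => by rw [Z7fun_of_y1_eq_zero h, h']; ring,
   fun _ _ _ _ h h' => by rw [Z7fun_of_y3_eq_zero h', h]; ring,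
   fun _ _ _ _ h h' => by rw [Z7fun_of_y2_add_y3_eq_zero h', h]; ring,
   fun _ _ _ _ h h' => by rw [Z7fun_of_y2_add_y3_eq_zero h', h]; ring,
   fun _ _ _ _ h h' => by rw [Z7fun_of_y4_eq_zero h', h]; ring,
   fun _ _ _ _ h h' => by rw [Z7fun_of_y3_eq_zero h', h]; ring,
   fun _ _ _ _ h h' => by rw [Z7fun_of_y1_sub_y3_eq_zero h, h']; ring,
   fun _ _ _ _ h h' => by rw [Z7fun_of_y1_eq_zero h, h']; ring⟩
end

section
/- The curve defined by y1^2 - 2 y1 y3 + y3^2 - y1 y4 = 0 and y2^2 + y2 y3 + y1 y4 - y3 y4 - y4^2 = 0 is contained in the quartic surface Z7, i.e., the defining quartic of Z7 lies in the ideal generated by these two quadrics. -/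
open MvPolynomial

/-- The quadric `y1² - 2 y1 y3 + y3² - y1 y4`. -/
noncomputable def E7q1 : MvPolynomial (Fin 4) ℂ :=
  X 0 ^ 2 - 2 * X 0 * X 2 + X 2 ^ 2 - X 0 * X 3

/-- The quadric `y2² + y2 y3 + y1 y4 - y3 y4 - y4²`. -/
noncomputable def E7q2 : MvPolynomial (Fin 4) ℂ :=
  X 1 ^ 2 + X 1 * X 2 + X 0 * X 3 - X 2 * X 3 - X 3 ^ 2

theorem Z7_eq_linear_combination :
    Z7 = (X 1 - X 3) * (X 1 + X 2) * E7q1 + X 2 * (X 0 - X 2) * E7q2 := by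
  unfold Z7 E7q1 E7q2
  ring

/-- The curve cut out by the two quadrics is contained in `Z₇`: the defining quartic of `Z₇`
lies in the ideal generated by the two quadrics. -/
theorem Z7_mem_ideal_of_genus_one_curve : Z7 ∈ Ideal.span ({E7q1, E7q2} : Set (MvPolynomial (Fin 4) ℂ)) :=
  Ideal.mem_span_pair.mpr ⟨_, _, Z7_eq_linear_combination.symm⟩
end

section
/- The permutations s1 = (2,4)(3,7)(6,8)(9,11)(10,14)(13,15), s2 = (2,6)(4,8)(9,13)(11,15), s3 = (1,2)(3,8)(4,7)(5,6)(9,13)(10,12)(14,16) of {1,...,16} generate a group of order 32 isomorphic to a semidirect product ℤ/8ℤ ⋊ (ℤ/2ℤ)^2. -/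
set_option maxRecDepth 100000

/-- The involution `s₁ = (2,4)(3,7)(6,8)(9,11)(10,14)(13,15)`. -/
def octS1 : Equiv.Perm ℕ :=
  c[2, 4] * c[3, 7] * c[6, 8] * c[9, 11] * c[10, 14] * c[13, 15]

/-- The involution `s₂ = (2,6)(4,8)(9,13)(11,15)`. -/
def octS2 : Equiv.Perm ℕ := c[2, 6] * c[4, 8] * c[9, 13] * c[11, 15]

/-- The involution `s₃ = (1,2)(3,8)(4,7)(5,6)(9,13)(10,12)(14,16)`. -/
def octS3 : Equiv.Perm ℕ :=
  c[1, 2] * c[3, 8] * c[4, 7] * c[5, 6] * c[9, 13] * c[10, 12] * c[14, 16]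

/-- The 8-cycle-like element `a = s₁ s₃`. -/
def octA : Equiv.Perm ℕ := octS1 * octS3

lemma swapBig {a b n : ℕ} (ha : a < 17) (hb : b < 17) (hn : 17 ≤ n) :
    Equiv.swap a b n = n := by
  rw [Equiv.swap_apply_of_ne_of_ne] <;> omega

lemma cycPairSwap (a b : ℕ) (h : (([a, b] : List ℕ) : Cycle ℕ).Nodup) :
    Cycle.formPerm (([a, b] : List ℕ) : Cycle ℕ) h = Equiv.swap a b := rfl

lemma octR1 : octS1 * octS1 = 1 := by
  ext n
  rcases lt_or_ge n 17 with h | h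
  · interval_cases n <;> decide
  · simp only [Equiv.Perm.coe_one, id_eq, Equiv.Perm.mul_apply]
    simp only [octS1, Cycle.formPerm_coe, List.formPerm_pair, Equiv.Perm.mul_apply]
    simp +decide only [cycPairSwap, swapBig, h]

lemma octR2 : octS2 * octS2 = 1 := by
  ext n
  rcases lt_or_ge n 17 with h | h
  · interval_cases n <;> decide
  · simp only [Equiv.Perm.coe_one, id_eq, Equiv.Perm.mul_apply]
    simp only [octS2, Cycle.formPerm_coe, List.formPerm_pair, Equiv.Perm.mul_apply]
    simp +decide only [cycPairSwap, swapBig, h]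

lemma octR3 : octS1 * octS2 = octS2 * octS1 := by
  ext n
  rcases lt_or_ge n 17 with h | h
  · interval_cases n <;> decide
  · simp only [Equiv.Perm.mul_apply]
    simp only [octS1, octS2, Cycle.formPerm_coe, List.formPerm_pair, Equiv.Perm.mul_apply]
    simp +decide only [cycPairSwap, swapBig, h]

lemma octR4 : octA ^ 8 = 1 := by
  ext n
  rcases lt_or_ge n 17 with h | h
  · interval_cases n <;> decide
  · simp only [pow_succ, pow_zero, one_mul, Equiv.Perm.coe_one, id_eq, Equiv.Perm.mul_apply]
    simp only [octA, octS1, octS3, Cycle.formPerm_coe, List.formPerm_pair,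
      Equiv.Perm.mul_apply]
    simp +decide only [cycPairSwap, swapBig, h]

lemma octR5 : octS1 * octA * octS1 = octA ^ 7 := by
  ext n
  rcases lt_or_ge n 17 with h | h
  · interval_cases n <;> decide
  · simp only [pow_succ, pow_zero, one_mul, Equiv.Perm.mul_apply]
    simp only [octA, octS1, octS3, Cycle.formPerm_coe, List.formPerm_pair,
      Equiv.Perm.mul_apply]
    simp +decide only [cycPairSwap, swapBig, h]

lemma octR6 : octS2 * octA * octS2 = octA ^ 5 := by
  ext n
  rcases lt_or_ge n 17 with h | h
  · interval_cases n <;> decide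
  · simp only [pow_succ, pow_zero, one_mul, Equiv.Perm.mul_apply]
    simp only [octA, octS1, octS2, octS3, Cycle.formPerm_coe, List.formPerm_pair,
      Equiv.Perm.mul_apply]
    simp +decide only [cycPairSwap, swapBig, h]

lemma octS1_inv : octS1⁻¹ = octS1 := by
  rw [inv_eq_iff_mul_eq_one, octR1]

lemma octS2_inv : octS2⁻¹ = octS2 := by
  rw [inv_eq_iff_mul_eq_one, octR2]

/-- Hom out of `Multiplicative (ZMod n)` given an element whose `n`-th power is `1`. -/
def zmodPowHom (n : ℕ) [NeZero n] {M : Type*} [Monoid M] (u : M) (h : u ^ n = 1) :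
    Multiplicative (ZMod n) →* M where
  toFun x := u ^ (Multiplicative.toAdd x).val
  map_one' := by simp
  map_mul' x y := by
    simp only [toAdd_mul, ZMod.val_add, ← pow_eq_pow_mod _ h, pow_add]

@[simp] lemma zmodPowHom_apply (n : ℕ) [NeZero n] {M : Type*} [Monoid M] (u : M)
    (h : u ^ n = 1) (x : Multiplicative (ZMod n)) :
    zmodPowHom n u h x = u ^ (Multiplicative.toAdd x).val := rfl

/-- multiplication by a unit of `ZMod 8`, as an automorphism of `Multiplicative (ZMod 8)`. -/
def octAut (u : (ZMod 8)ˣ) : MulAut (Multiplicative (ZMod 8)) :=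
  AddEquiv.toMultiplicative (AddAut.mulLeft u)

lemma octAut_apply (u : (ZMod 8)ˣ) (x : Multiplicative (ZMod 8)) :
    octAut u x = Multiplicative.ofAdd ((u : ZMod 8) * x.toAdd) := rfl

def u7 : (ZMod 8)ˣ := ⟨7, 7, by decide, by decide⟩
def u5 : (ZMod 8)ˣ := ⟨5, 5, by decide, by decide⟩

lemma octAut7_sq : octAut u7 ^ 2 = 1 := by
  ext x
  simp only [pow_two, MulAut.mul_apply, octAut_apply, toAdd_ofAdd, MulAut.one_apply]
  show Multiplicative.ofAdd ((7 : ZMod 8) * ((7 : ZMod 8) * x.toAdd)) = x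
  rw [← mul_assoc, show (7 : ZMod 8) * 7 = 1 by decide, one_mul, ofAdd_toAdd]

lemma octAut5_sq : octAut u5 ^ 2 = 1 := by
  ext x
  simp only [pow_two, MulAut.mul_apply, octAut_apply, toAdd_ofAdd, MulAut.one_apply]
  show Multiplicative.ofAdd ((5 : ZMod 8) * ((5 : ZMod 8) * x.toAdd)) = x
  rw [← mul_assoc, show (5 : ZMod 8) * 5 = 1 by decide, one_mul, ofAdd_toAdd]

lemma octAut_comm : Commute (octAut u7) (octAut u5) := by
  ext x
  simp only [MulAut.mul_apply, octAut_apply, toAdd_ofAdd]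
  rw [← mul_assoc, ← mul_assoc, mul_comm ((u7 : ZMod 8)) ((u5 : ZMod 8))]

/-- The action `φ` of `(ℤ/2)²` on `ℤ/8`. -/
def octPhi : Multiplicative (ZMod 2) × Multiplicative (ZMod 2) →*
    MulAut (Multiplicative (ZMod 8)) :=
  MonoidHom.noncommCoprod (zmodPowHom 2 (octAut u7) octAut7_sq)
    (zmodPowHom 2 (octAut u5) octAut5_sq)
    (fun _ _ => Commute.pow_pow octAut_comm _ _)

/-- The hom `ℤ/8 →* Perm ℕ` sending `1` to `a`. -/
def octF1 : Multiplicative (ZMod 8) →* Equiv.Perm ℕ := zmodPowHom 8 octA octR4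

/-- The hom `(ℤ/2)² →* Perm ℕ` sending the generators to `s₁, s₂`. -/
def octF2 : Multiplicative (ZMod 2) × Multiplicative (ZMod 2) →* Equiv.Perm ℕ :=
  MonoidHom.noncommCoprod (zmodPowHom 2 octS1 octR1) (zmodPowHom 2 octS2 octR2)
    (fun _ _ => Commute.pow_pow octR3 _ _)

lemma octK7 (x : Multiplicative (ZMod 8)) :
    octF1 (octAut u7 x) = octS1 * octF1 x * octS1⁻¹ := by
  simp only [octF1, zmodPowHom_apply, octAut_apply, toAdd_ofAdd]
  have h7 : octA ^ 7 = octS1 * octA * octS1⁻¹ := by rw [octS1_inv]; exact octR5.symm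
  rw [ZMod.val_mul, show ((u7 : ZMod 8)).val = 7 from rfl,
    ← pow_eq_pow_mod _ octR4, pow_mul, h7, conj_pow]

lemma octK5 (x : Multiplicative (ZMod 8)) :
    octF1 (octAut u5 x) = octS2 * octF1 x * octS2⁻¹ := by
  simp only [octF1, zmodPowHom_apply, octAut_apply, toAdd_ofAdd]
  have h5 : octA ^ 5 = octS2 * octA * octS2⁻¹ := by rw [octS2_inv]; exact octR6.symm
  rw [ZMod.val_mul, show ((u5 : ZMod 8)).val = 5 from rfl,
    ← pow_eq_pow_mod _ octR4, pow_mul, h5, conj_pow]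

lemma zmod2_cases (i : Multiplicative (ZMod 2)) : i = 1 ∨ i = Multiplicative.ofAdd 1 := by
  revert i; decide

lemma octCond : ∀ g, octF1.comp ((octPhi g).toMonoidHom) =
    (MulAut.conj (octF2 g)).toMonoidHom.comp octF1 := by
  rintro ⟨i, j⟩
  refine MonoidHom.ext fun x => ?_
  simp only [MonoidHom.comp_apply, MulEquiv.coe_toMonoidHom, MulAut.conj_apply]
  have hphi : octPhi (i, j) = (octAut u7) ^ i.toAdd.val * (octAut u5) ^ j.toAdd.val := rfl
  have hf2 : octF2 (i, j) = octS1 ^ i.toAdd.val * octS2 ^ j.toAdd.val := rfl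
  rcases zmod2_cases i with hi | hi <;> rcases zmod2_cases j with hj | hj <;>
    subst hi <;> subst hj <;>
    simp only [hphi, hf2, toAdd_one, toAdd_ofAdd, ZMod.val_zero, ZMod.val_one, pow_zero,
      pow_one, one_mul, mul_one, MulAut.one_apply, MulAut.mul_apply, mul_inv_rev]
  · simp
  · rw [octK5]
  · rw [octK7]
  · rw [octK7, octK5, octS1_inv, octS2_inv]; simp [mul_assoc]

/-- The lifted hom from the semidirect product to `Perm ℕ`. -/
def octPsi : (Multiplicative (ZMod 8) ⋊[octPhi]
    (Multiplicative (ZMod 2) × Multiplicative (ZMod 2))) →* Equiv.Perm ℕ :=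
  SemidirectProduct.lift octF1 octF2 octCond

lemma octPsi_apply (z) : octPsi z = octF1 z.left * octF2 z.right := rfl

lemma octPsi_inl (n) : octPsi (SemidirectProduct.inl n) = octF1 n :=
  SemidirectProduct.lift_inl octF1 octF2 octCond n

lemma octPsi_inr (g) : octPsi (SemidirectProduct.inr g) = octF2 g :=
  SemidirectProduct.lift_inr octF1 octF2 octCond g

lemma octF2_apply (i j : Multiplicative (ZMod 2)) :
    octF2 (i, j) = octS1 ^ i.toAdd.val * octS2 ^ j.toAdd.val := rfl

lemma octF1_apply (x : Multiplicative (ZMod 8)) : octF1 x = octA ^ x.toAdd.val := rfl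

lemma octKey : ∀ a b c : ℕ, a < 8 → b < 2 → c < 2 →
    (octA ^ a * (octS1 ^ b * octS2 ^ c)) 1 = 1 →
    (octA ^ a * (octS1 ^ b * octS2 ^ c)) 2 = 2 → a = 0 ∧ b = 0 ∧ c = 0 := by
  intro a b c ha hb hc
  interval_cases a <;> interval_cases b <;> interval_cases c <;> decide

lemma octPsi_injective : Function.Injective octPsi := by
  rw [injective_iff_map_eq_one]
  rintro ⟨x, i, j⟩ hz
  rw [octPsi_apply] at hz
  have hf1 : octF1 x = octA ^ x.toAdd.val := rfl
  have hf2 : octF2 (i, j) = octS1 ^ i.toAdd.val * octS2 ^ j.toAdd.val := rfl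
  rw [hf1, hf2] at hz
  have h1 := Equiv.ext_iff.mp hz 1
  have h2 := Equiv.ext_iff.mp hz 2
  obtain ⟨ha, hb, hc⟩ := octKey _ _ _ (ZMod.val_lt _) (ZMod.val_lt _) (ZMod.val_lt _) h1 h2
  have hx : x = 1 := by
    have := (ZMod.val_eq_zero _).mp ha
    rw [← ofAdd_toAdd x, this]; rfl
  have hi : i = 1 := by
    have := (ZMod.val_eq_zero _).mp hb
    rw [← ofAdd_toAdd i, this]; rfl
  have hj : j = 1 := by
    have := (ZMod.val_eq_zero _).mp hc
    rw [← ofAdd_toAdd j, this]; rfl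
  subst hx hi hj
  rfl

lemma octS1_mem_range : octS1 ∈ octPsi.range := by
  refine ⟨SemidirectProduct.inr (Multiplicative.ofAdd 1, 1), ?_⟩
  rw [octPsi_inr, octF2_apply]
  simp [ZMod.val_one]

lemma octS2_mem_range : octS2 ∈ octPsi.range := by
  refine ⟨SemidirectProduct.inr (1, Multiplicative.ofAdd 1), ?_⟩
  rw [octPsi_inr, octF2_apply]
  simp [ZMod.val_one]

lemma octS3_mem_range : octS3 ∈ octPsi.range := by
  refine ⟨SemidirectProduct.inr (Multiplicative.ofAdd 1, 1) *
    SemidirectProduct.inl (Multiplicative.ofAdd 1), ?_⟩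
  rw [map_mul, octPsi_inr, octPsi_inl, octF2_apply, octF1_apply]
  simp only [toAdd_ofAdd, toAdd_one, ZMod.val_one, ZMod.val_zero, pow_one, pow_zero, mul_one]
  rw [show ZMod.val (1 : ZMod 8) = 1 from rfl, pow_one, octA, ← mul_assoc, octR1, one_mul]

lemma octRange_eq :
    octPsi.range = Subgroup.closure ({octS1, octS2, octS3} : Set (Equiv.Perm ℕ)) := by
  apply le_antisymm
  · rintro x ⟨z, rfl⟩
    rw [octPsi_apply]
    have hS1 : octS1 ∈ Subgroup.closure ({octS1, octS2, octS3} : Set (Equiv.Perm ℕ)) :=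
      Subgroup.subset_closure (by simp)
    have hS2 : octS2 ∈ Subgroup.closure ({octS1, octS2, octS3} : Set (Equiv.Perm ℕ)) :=
      Subgroup.subset_closure (by simp)
    have hS3 : octS3 ∈ Subgroup.closure ({octS1, octS2, octS3} : Set (Equiv.Perm ℕ)) :=
      Subgroup.subset_closure (by simp)
    obtain ⟨x, i, j⟩ := z
    have hf1 : octF1 x = octA ^ x.toAdd.val := rfl
    have hf2 : octF2 (i, j) = octS1 ^ i.toAdd.val * octS2 ^ j.toAdd.val := rfl
    rw [hf1, hf2]
    exact mul_mem (pow_mem (mul_mem hS1 hS3) _) (mul_mem (pow_mem hS1 _) (pow_mem hS2 _))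
  · rw [Subgroup.closure_le]
    rintro x (rfl | rfl | rfl)
    · exact octS1_mem_range
    · exact octS2_mem_range
    · exact octS3_mem_range

/-- The semidirect product is equivalent (as a type) to the product. -/
def sdpEquivProd {N G : Type*} [Group N] [Group G] (φ : G →* MulAut N) :
    (N ⋊[φ] G) ≃ N × G where
  toFun z := (z.left, z.right)
  invFun p := ⟨p.1, p.2⟩
  left_inv _ := rfl
  right_inv _ := rfl

/-- The permutations `s₁, s₂, s₃` generate a group of order `32`, isomorphic to a semidirect
product `ℤ/8ℤ ⋊ (ℤ/2ℤ)²`. -/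
theorem octS_generate_order32 :
    Nat.card (Subgroup.closure ({octS1, octS2, octS3} : Set (Equiv.Perm ℕ))) = 32 ∧
    ∃ φ : Multiplicative (ZMod 2) × Multiplicative (ZMod 2) →*
        MulAut (Multiplicative (ZMod 8)),
      Nonempty ((Subgroup.closure ({octS1, octS2, octS3} : Set (Equiv.Perm ℕ))) ≃*
        (Multiplicative (ZMod 8) ⋊[φ] (Multiplicative (ZMod 2) × Multiplicative (ZMod 2)))) := by
  have e1 : (Multiplicative (ZMod 8) ⋊[octPhi]
      (Multiplicative (ZMod 2) × Multiplicative (ZMod 2))) ≃* octPsi.range :=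
    MonoidHom.ofInjective octPsi_injective
  have e2 : (Subgroup.closure ({octS1, octS2, octS3} : Set (Equiv.Perm ℕ))) ≃*
      (Multiplicative (ZMod 8) ⋊[octPhi]
      (Multiplicative (ZMod 2) × Multiplicative (ZMod 2))) :=
    (MulEquiv.subgroupCongr octRange_eq.symm).trans e1.symm
  constructor
  · rw [Nat.card_congr e2.toEquiv, Nat.card_congr (sdpEquivProd octPhi), Nat.card_prod,
      Nat.card_prod]
    simp [Nat.card_eq_fintype_card, ZMod.card]
  · exact ⟨octPhi, ⟨e2⟩⟩
end
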